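/- Suppose gcd(n, q) = 1. Let C be a cyclic code of length n over R whose component codes are C_i = ⟨g_i(x)⟩ ⊆ 𝔽_q[x]/⟨x^n − 1⟩, where each g_i ∈ 𝔽_q[x] is a monic divisor of x^n − 1. Then C is an LCD code if and only if g_i is self-reciprocal for every i with 1 ≤ i ≤ e. -/

import Mathlib

open Polynomial

noncomputable section

/-- The ring `R = 𝔽_q[u]/⟨u^e − 1⟩`. -/
abbrev Rring (F : Type) [Field F] (e : ℕ) : Type := AdjoinRoot ((X : Polynomial F) ^ e - 1)

/-- Dual of a linear code (submodule of `ι → S`) with respect to the standard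
bilinear form `⟨x, y⟩ = ∑ j, x j * y j`. -/
def dualCode {S ι : Type} [CommRing S] [Fintype ι] (C : Submodule S (ι → S)) :
    Submodule S (ι → S) where
  carrier := {x | ∀ y ∈ C, ∑ j, x j * y j = 0}
  add_mem' := by
    intro a b ha hb y hy
    have : ∑ j, (a j + b j) * y j = (∑ j, a j * y j) + ∑ j, b j * y j := by
      rw [← Finset.sum_add_distrib]; simp [add_mul]
    simpa [this] using by rw [ha y hy, hb y hy, add_zero]
  zero_mem' := by intro y hy; simp
  smul_mem' := by
    intro r x hx y hy
    have : ∑ j, (r • x) j * y j = r * ∑ j, x j * y j := by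
      rw [Finset.mul_sum]; simp [mul_assoc]
    rw [this, hx y hy, mul_zero]

/-- Dual of an arbitrary set of words with respect to the standard bilinear form. -/
def dualSet {S ι : Type} [CommRing S] [Fintype ι] (s : Set (ι → S)) : Set (ι → S) :=
  {x | ∀ y ∈ s, ∑ j, x j * y j = 0}

/-- The Gray map `φ : R^n → 𝔽_q^{en}` determined by the algebra maps `σ_i : R → 𝔽_q`
and the matrix `M`: it sends `(r_0, …, r_{n−1})` to the concatenation of the row
vectors `(σ_1(r_j), …, σ_e(r_j))·M`. -/
def grayMap {F : Type} [Field F] {e n : ℕ}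
    (σ : Fin e → (Rring F e →ₐ[F] F)) (M : Matrix (Fin e) (Fin e) F)
    (r : Fin n → Rring F e) : Fin n × Fin e → F :=
  fun jk => ∑ i, σ i (r jk.1) * M i jk.2

/-- The `i`-th component code of a linear code `C ⊆ R^n`: the image of `C` under the
map applying `σ_i` to each coordinate. -/
def compCode {F : Type} [Field F] {e n : ℕ}
    (σi : Rring F e →ₐ[F] F) (C : Submodule (Rring F e) (Fin n → Rring F e)) :
    Submodule F (Fin n → F) :=
  Submodule.map (σi.toLinearMap.compLeft (Fin n)) (C.restrictScalars F)

/-- The cyclic shift `(c_0, …, c_{n−1}) ↦ (c_{n−1}, c_0, …, c_{n−2})`. -/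
def cyclicShift {S : Type} {n : ℕ} [NeZero n] (c : Fin n → S) : Fin n → S :=
  fun j => c (j - 1)

/-- The identification of `S^n` with `S[x]/⟨x^n − 1⟩`,
`(c_0, …, c_{n−1}) ↦ c_0 + c_1 x + ⋯ + c_{n−1} x^{n−1}`. -/
def toPoly {S : Type} [CommRing S] {n : ℕ} (c : Fin n → S) :
    Polynomial S ⧸ Ideal.span {(X : Polynomial S) ^ n - 1} :=
  Ideal.Quotient.mk _ (∑ j : Fin n, Polynomial.C (c j) * X ^ (j : ℕ))

end

/-- A monic polynomial `g` (with `g(0) ≠ 0`) is self-reciprocal if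
`x^{deg g}·g(1/x) = g(0)·g(x)`. -/
def SelfReciprocal {F : Type} [Field F] (g : Polynomial F) : Prop :=
  g.reverse = Polynomial.C (g.coeff 0) * g

set_option maxHeartbeats 1000000
set_option synthInstance.maxHeartbeats 200000

noncomputable section AuxC


set_option linter.unusedSectionVars false


variable {F : Type} [Field F] {n : ℕ} [NeZero n]
open Fin.NatCast Fin.CommRing

local notation "In" => (Ideal.span {(X : Polynomial F) ^ n - 1})
local notation "mkq" => (Ideal.Quotient.mk In)

lemma monic_Xn : ((X : Polynomial F) ^ n - 1).Monic := by
  simpa using monic_X_pow_sub_C (1 : F) (NeZero.ne n)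

lemma Xn_ne_zero : ((X : Polynomial F) ^ n - 1) ≠ 0 := (monic_Xn).ne_zero

lemma natDegree_Xn : ((X : Polynomial F) ^ n - 1).natDegree = n := by
  simpa using natDegree_X_pow_sub_C (n := n) (r := (1 : F))

lemma degree_Xn : ((X : Polynomial F) ^ n - 1).degree = n := by
  rw [degree_eq_natDegree (Xn_ne_zero (F := F) (n := n)), natDegree_Xn]

def psi (k : ℕ) : Polynomial F ⧸ In := mkq (X ^ k)

lemma mkq_eq_zero_iff (p : Polynomial F) :
    mkq p = 0 ↔ ((X : Polynomial F) ^ n - 1) ∣ p := by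
  rw [Ideal.Quotient.eq_zero_iff_mem, Ideal.mem_span_singleton]

lemma psi_mul (k l : ℕ) : (psi k : Polynomial F ⧸ In) * psi l = psi (k + l) := by
  simp [psi, ← map_mul, ← pow_add]

lemma psi_zero : (psi 0 : Polynomial F ⧸ In) = 1 := by simp [psi]

lemma psi_mod (k : ℕ) : (psi k : Polynomial F ⧸ In) = psi (k % n) := by
  have h : (X : Polynomial F) ^ n - 1 ∣ X ^ k - X ^ (k % n) := by
    have hk : X ^ k = (X ^ (k % n) : Polynomial F) * ((X ^ n) ^ (k / n)) := by
      rw [← pow_mul, ← pow_add, Nat.mod_add_div k n]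
    rw [hk]
    have : (X : Polynomial F) ^ (k % n) * ((X ^ n) ^ (k / n)) - X ^ (k % n)
        = X ^ (k % n) * ((X ^ n) ^ (k / n) - 1) := by ring
    rw [this]
    refine Dvd.dvd.mul_left ?_ _
    simpa using sub_dvd_pow_sub_pow ((X : Polynomial F) ^ n) 1 (k / n)
  have h2 := (mkq_eq_zero_iff (X ^ k - X ^ (k % n))).2 h
  rw [map_sub, sub_eq_zero] at h2
  exact h2

lemma psi_congr {k l : ℕ} (h : k ≡ l [MOD n]) : (psi k : Polynomial F ⧸ In) = psi l := by
  rw [psi_mod, show k % n = l % n from h, ← psi_mod]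

lemma toPoly_def (a : Fin n → F) :
    toPoly a = ∑ j : Fin n, mkq (C (a j)) * psi (j : ℕ) := by
  simp [toPoly, psi, map_sum, map_mul]

lemma toPoly_sub (a b : Fin n → F) : toPoly a - toPoly b = toPoly (a - b) := by
  simp [toPoly_def, Pi.sub_apply, ← Finset.sum_sub_distrib, map_sub, sub_mul]

lemma toPoly_eq_zero {a : Fin n → F} (h : toPoly a = 0) : a = 0 := by
  set p : Polynomial F := ∑ j : Fin n, C (a j) * X ^ (j : ℕ) with hp
  have hdvd : ((X : Polynomial F) ^ n - 1) ∣ p := (mkq_eq_zero_iff p).1 h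
  have hdeg : p.degree < (n : WithBot ℕ) := by
    apply lt_of_le_of_lt (degree_sum_le _ _)
    apply (Finset.sup_lt_iff (by exact_mod_cast WithBot.bot_lt_coe n)).2
    intro j _
    exact lt_of_le_of_lt (degree_C_mul_X_pow_le _ _) (by exact_mod_cast j.isLt)
  have hp0 : p = 0 := by
    apply eq_zero_of_dvd_of_degree_lt hdvd
    rwa [degree_Xn]
  funext j
  have hc : p.coeff (j : ℕ) = a j := by
    rw [hp, finset_sum_coeff, Finset.sum_eq_single j]
    · simp
    · intro k _ hk
      have : ((j : ℕ) = (k : ℕ)) = False := by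
        simp [Fin.val_eq_val, (by exact fun h' => hk h'.symm : ¬ (j = k))]
        exact fun h' => hk h'.symm
      simp [coeff_C_mul, coeff_X_pow, this]
    · simp
  rw [hp0] at hc
  simpa using hc.symm

lemma toPoly_inj : Function.Injective (toPoly (S := F) (n := n)) := by
  intro a b h
  have h0 : toPoly (a - b) = 0 := by rw [← toPoly_sub, h, sub_self]
  have := toPoly_eq_zero h0
  exact sub_eq_zero.mp this

lemma toPoly_surj : Function.Surjective (toPoly (S := F) (n := n)) := by
  intro z
  obtain ⟨p, rfl⟩ := Ideal.Quotient.mk_surjective z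
  set r := p %ₘ ((X : Polynomial F) ^ n - 1) with hr
  refine ⟨fun j => r.coeff (j : ℕ), ?_⟩
  have h1 : mkq r = mkq p := by
    rw [Ideal.Quotient.mk_eq_mk_iff_sub_mem, Ideal.mem_span_singleton]
    have h2 := modByMonic_eq_sub_mul_div p ((X : Polynomial F) ^ n - 1)
    rw [hr, h2]
    exact ⟨-(p /ₘ (X ^ n - 1)), by ring⟩
  have hdeg : r.natDegree < n := by
    rcases eq_or_ne r 0 with h0 | h0
    · simpa [h0] using Nat.pos_of_ne_zero (NeZero.ne n)
    · have h3 := degree_modByMonic_lt p (monic_Xn (F := F) (n := n))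
      rw [degree_Xn] at h3
      exact (natDegree_lt_iff_degree_lt h0).mpr h3
  have h4 : r = ∑ j : Fin n, C (r.coeff (j : ℕ)) * X ^ (j : ℕ) := by
    conv_lhs => rw [as_sum_range' r n hdeg]
    rw [← Fin.sum_univ_eq_sum_range (fun i => (monomial i) (r.coeff i)) n]
    simp [C_mul_X_pow_eq_monomial]
  rw [toPoly, ← h4, h1]

lemma psi_pow (k m : ℕ) : (psi k : Polynomial F ⧸ In) ^ m = psi (k * m) := by
  simp [psi, ← map_pow, ← pow_mul]

lemma psi_n_mul (m : ℕ) : (psi (n * m) : Polynomial F ⧸ In) = 1 := by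
  rw [psi_mod, Nat.mul_mod_right, psi_zero]

def phiA : (Polynomial F ⧸ In) →ₐ[F] (Polynomial F ⧸ In) :=
  Ideal.Quotient.liftₐ In (aeval (psi (n - 1)))
    (by
      intro a ha
      rw [Ideal.mem_span_singleton] at ha
      obtain ⟨c, rfl⟩ := ha
      rw [map_mul]
      have h1 : (aeval (psi (n-1) : Polynomial F ⧸ In)) ((X : Polynomial F) ^ n - 1) = 0 := by
        rw [map_sub, map_pow, map_one, aeval_X, psi_pow]
        have : (n - 1) * n = n * (n - 1) := Nat.mul_comm _ _
        rw [this, psi_n_mul, sub_self]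
      rw [h1, zero_mul])

lemma phiA_mk (p : Polynomial F) : phiA (mkq p) = aeval (psi (n - 1) : Polynomial F ⧸ In) p := by
  rfl

lemma algebraMap_mkC (c : F) : algebraMap F (Polynomial F ⧸ In) c = mkq (C c) := rfl

lemma phiA_mkC (c : F) : phiA (mkq (C c)) = mkq (C c) := by
  rw [phiA_mk, aeval_C, algebraMap_mkC]

lemma phiA_psi (k : ℕ) : phiA (psi k : Polynomial F ⧸ In) = psi ((n - 1) * k) := by
  rw [psi, phiA_mk, map_pow, aeval_X, psi_pow]

lemma psi_val_add (a b : Fin n) :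
    (psi (((a + b : Fin n) : ℕ)) : Polynomial F ⧸ In) = psi ((a : ℕ) + (b : ℕ)) := by
  rw [Fin.val_add, ← psi_mod]

def rev {n : ℕ} [NeZero n] (b : Fin n → F) : Fin n → F := fun k => b (-k)

lemma psi_neg_val (j : Fin n) :
    (psi (((-j : Fin n) : ℕ)) : Polynomial F ⧸ In) = psi ((n - 1) * (j : ℕ)) := by
  have key : ∀ x : Polynomial F ⧸ In, x * psi ((j : ℕ)) = 1 → x = psi ((n-1) * (j:ℕ)) := by
    intro x hx
    have h2 : (psi ((n-1) * (j:ℕ)) : Polynomial F ⧸ In) * psi ((j:ℕ)) = 1 := by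
      rw [psi_mul]
      have harith : (n - 1) * (j : ℕ) + (j : ℕ) = n * (j : ℕ) := by
        obtain ⟨n', rfl⟩ := Nat.exists_eq_succ_of_ne_zero (NeZero.ne n)
        simp [Nat.succ_mul, Nat.succ_sub_one]
      rw [harith, psi_n_mul]
    calc x = x * (psi ((n-1)*(j:ℕ)) * psi ((j:ℕ))) := by rw [h2, mul_one]
    _ = psi ((n-1)*(j:ℕ)) * (x * psi ((j:ℕ))) := by ring
    _ = psi ((n-1)*(j:ℕ)) := by rw [hx, mul_one]
  apply key
  rw [psi_mul, ← psi_val_add, neg_add_cancel]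
  simp [psi_zero]

lemma phiA_toPoly (b : Fin n → F) : phiA (toPoly b) = toPoly (rev b) := by
  rw [toPoly_def, map_sum]
  rw [toPoly_def (rev b)]
  rw [← Equiv.sum_comp (Equiv.neg (Fin n)) (fun k => mkq (C (rev b k)) * psi ((k : ℕ)))]
  apply Finset.sum_congr rfl
  intro j _
  rw [map_mul, phiA_mkC, phiA_psi]
  have h1 : rev b ((Equiv.neg (Fin n)) j) = b j := by simp [rev]
  rw [h1, Equiv.neg_apply, psi_neg_val]

lemma reflect_sum {N : ℕ} {ι : Type} (s : Finset ι) (f : ι → Polynomial F) :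
    reflect N (∑ i ∈ s, f i) = ∑ i ∈ s, reflect N (f i) :=
  map_sum (AddMonoidHom.mk' (reflect N) (fun a b => reflect_add a b N)) f s

lemma mkq_reflect (p : Polynomial F) (d : ℕ) (hd : p.natDegree ≤ d) :
    mkq (reflect d p) = psi d * phiA (mkq p) := by
  have hp : p = ∑ m ∈ Finset.range (d+1), C (p.coeff m) * X ^ m := by
    conv_lhs => rw [as_sum_range' p (d+1) (Nat.lt_succ_of_le hd)]
    simp [C_mul_X_pow_eq_monomial]
  conv_lhs => rw [hp]
  conv_rhs => rw [hp]
  rw [reflect_sum, map_sum, map_sum, map_sum, Finset.mul_sum]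
  apply Finset.sum_congr rfl
  intro m hm
  have hmd : m ≤ d := Nat.lt_succ_iff.mp (Finset.mem_range.mp hm)
  have h2 : phiA (mkq (X ^ m)) = psi ((n-1) * m) := phiA_psi m
  have e1 : mkq (reflect d (C (p.coeff m) * X ^ m)) = mkq (C (p.coeff m)) * psi (d - m) := by
    rw [reflect_C_mul, reflect_monomial, revAt_le hmd, map_mul]
    rfl
  have e2 : psi d * phiA (mkq (C (p.coeff m) * X ^ m))
      = mkq (C (p.coeff m)) * ((psi d : Polynomial F ⧸ In) * psi ((n-1) * m)) := by
    rw [map_mul, map_mul, phiA_mkC, h2]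
    ring
  rw [e1, e2]
  have h4 : (psi d : Polynomial F ⧸ In) * psi ((n-1) * m) = psi (d - m) := by
    rw [psi_mul]
    have harith : d + (n - 1) * m = (d - m) + n * m := by
      obtain ⟨n', rfl⟩ := Nat.exists_eq_succ_of_ne_zero (NeZero.ne n)
      rw [Nat.succ_sub_one, Nat.succ_mul]
      have : ∃ t, n' * m = t := ⟨_, rfl⟩
      obtain ⟨t, ht⟩ := this
      rw [ht]
      omega
    rw [harith, ← psi_mul, psi_n_mul, mul_one]
  rw [h4]

lemma mkq_reverse (g : Polynomial F) : mkq (reverse g) = psi (g.natDegree) * phiA (mkq g) :=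
  mkq_reflect g _ le_rfl

lemma psi_isUnit (k : ℕ) : IsUnit (psi k : Polynomial F ⧸ In) := by
  apply IsUnit.of_mul_eq_one (psi (k * (n-1)))
  rw [psi_mul]
  have harith : k + k * (n - 1) = n * k := by
    obtain ⟨n', rfl⟩ := Nat.exists_eq_succ_of_ne_zero (NeZero.ne n)
    rw [Nat.succ_sub_one]
    have : ∃ t, k * n' = t := ⟨_, rfl⟩
    obtain ⟨t, ht⟩ := this
    rw [Nat.succ_mul, Nat.mul_comm n' k, ht]
    omega
  rw [harith, psi_n_mul]

lemma mem_dualCode {S ι : Type} [CommRing S] [Fintype ι] (D : Submodule S (ι → S)) (x : ι → S) :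
    x ∈ dualCode D ↔ ∀ y ∈ D, ∑ j, x j * y j = 0 := Iff.rfl

lemma toPoly_zero : toPoly (0 : Fin n → F) = 0 := by simp [toPoly]

lemma toPoly_mul (a b : Fin n → F) :
    toPoly a * toPoly b = toPoly (fun k => ∑ i, a i * b (k - i)) := by
  rw [toPoly_def a, toPoly_def b, Finset.sum_mul_sum, toPoly_def]
  calc ∑ i : Fin n, ∑ j : Fin n, (mkq (C (a i)) * psi ((i:ℕ))) * (mkq (C (b j)) * psi ((j:ℕ)))
      = ∑ i : Fin n, ∑ k : Fin n, mkq (C (a i * b (k - i))) * psi ((k:ℕ)) := by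
        apply Finset.sum_congr rfl; intro i _
        rw [← Equiv.sum_comp (Equiv.addLeft i) (fun k => mkq (C (a i * b (k - i))) * psi ((k:ℕ)))]
        apply Finset.sum_congr rfl; intro j _
        simp only [Equiv.coe_addLeft, add_sub_cancel_left]
        rw [psi_val_add, ← psi_mul, C_mul, map_mul]
        ring
    _ = ∑ k : Fin n, mkq (C (∑ i, a i * b (k - i))) * psi ((k:ℕ)) := by
        rw [Finset.sum_comm]
        refine Finset.sum_congr rfl fun k _ => ?_
        rw [← Finset.sum_mul]
        congr 1
        simp only [map_sum]

lemma shift_iter (c : Fin n → F) (m : ℕ) :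
    cyclicShift^[m] c = fun j => c (j - (m : Fin n)) := by
  induction m with
  | zero => simp
  | succ m ih =>
    rw [Function.iterate_succ_apply', ih]
    funext j
    show c (j - 1 - (m : Fin n)) = c (j - ((m+1 : ℕ) : Fin n))
    congr 1
    push_cast
    rw [sub_sub, add_comm]

lemma mem_shift_iter {D : Submodule F (Fin n → F)} (hshift : ∀ b ∈ D, cyclicShift b ∈ D)
    {b : Fin n → F} (hb : b ∈ D) (m : ℕ) : cyclicShift^[m] b ∈ D := by
  induction m with
  | zero => simpa using hb
  | succ m ih => rw [Function.iterate_succ_apply']; exact hshift _ ih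

lemma dual_iff_mul {D : Submodule F (Fin n → F)} (hshift : ∀ b ∈ D, cyclicShift b ∈ D)
    (a : Fin n → F) :
    a ∈ dualCode D ↔ ∀ b ∈ D, toPoly a * toPoly (rev b) = 0 := by
  constructor
  · intro ha b hb
    rw [toPoly_mul]
    have hz : (fun k : Fin n => ∑ i, a i * rev b (k - i)) = 0 := by
      funext k
      have hk : ∀ i : Fin n, rev b (k - i) = (cyclicShift^[(k:ℕ)] b) i := by
        intro i
        rw [shift_iter]
        show b (-(k - i)) = b (i - (((k:ℕ) : Fin n)))
        congr 1
        rw [Fin.cast_val_eq_self]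
        ring
      simp only [hk]
      exact ha _ (mem_shift_iter hshift hb ((k:ℕ)))
    rw [hz, toPoly_zero]
  · intro hmul y hy
    have h0 := hmul y hy
    rw [toPoly_mul] at h0
    have h2 := congrFun (toPoly_eq_zero h0) 0
    simp only [Pi.zero_apply] at h2
    rw [← h2]
    apply Finset.sum_congr rfl
    intro i _
    show a i * y i = a i * rev y (0 - i)
    congr 1
    show y i = y (-(0 - i))
    congr 1
    ring

lemma reverse_Xn : ((X : Polynomial F) ^ n - 1).reverse = 1 - X ^ n := by
  have h0 : ((X : Polynomial F) ^ n - 1).reverse = reflect n ((X : Polynomial F)^n - 1) := by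
    rw [reverse, natDegree_Xn]
  rw [h0]
  have h1 : reflect n ((X : Polynomial F)^n - 1)
      = reflect n ((X : Polynomial F)^n) - reflect n (X ^ 0) := by
    rw [pow_zero]
    exact map_sub (AddMonoidHom.mk' (reflect n) (fun a b => reflect_add a b n)) _ _
  rw [h1, reflect_monomial, reflect_monomial, revAt_le (le_refl n), revAt_le (Nat.zero_le n)]
  simp

lemma squarefree_Xn (hn : (n : F) ≠ 0) : Squarefree ((X : Polynomial F) ^ n - 1) := by
  have := (separable_X_pow_sub_C (1 : F) hn one_ne_zero).squarefree
  simpa using this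

/-- The key single-code lemma. -/
lemma key_lemma (hn : (n : F) ≠ 0) (g : Polynomial F) (hm : g.Monic)
    (hg : g ∣ (X : Polynomial F) ^ n - 1)
    (D : Submodule F (Fin n → F)) (hshift : ∀ b ∈ D, cyclicShift b ∈ D)
    (hD : ∀ a, a ∈ D ↔ toPoly a ∈ Ideal.span {mkq g}) :
    D ⊓ dualCode D = ⊥ ↔ g.reverse = C (g.coeff 0) * g := by
  classical
  obtain ⟨h, hh⟩ := hg
  have hgne : g ≠ 0 := hm.ne_zero
  have hhne : h ≠ 0 := by
    intro h0; rw [h0, mul_zero] at hh; exact Xn_ne_zero hh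
  have hg0 : g.coeff 0 ≠ 0 := by
    intro h0
    have hx : (X : Polynomial F) ∣ g := X_dvd_iff.mpr h0
    have hx2 : (X : Polynomial F) ∣ X ^ n - 1 := hx.trans ⟨h, hh⟩
    rw [X_dvd_iff] at hx2
    have hn0 : ¬ ((0:ℕ) = n) := fun hEq => NeZero.ne n hEq.symm
    simp [hn0] at hx2
  set h' : Polynomial F := -h.reverse with hh'def
  have hrev : g.reverse * h' = (X : Polynomial F) ^ n - 1 := by
    have hrm := reverse_mul_of_domain g h
    rw [← hh, reverse_Xn] at hrm
    rw [hh'def, mul_neg, ← hrm]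
    ring
  have hrevgne : g.reverse ≠ 0 := fun h0 => hgne (reverse_eq_zero.mp h0)
  have hh'ne : h' ≠ 0 := by
    intro h0; rw [h0, mul_zero] at hrev; exact Xn_ne_zero hrev.symm
  have hndeg_rev : g.reverse.natDegree = g.natDegree := by
    have h1 := natDegree_eq_reverse_natDegree_add_natTrailingDegree g
    have ht : g.natTrailingDegree = 0 := natTrailingDegree_eq_zero.mpr (Or.inr hg0)
    omega
  have hdegsum : g.natDegree + h'.natDegree = n := by
    have h1 := natDegree_mul hrevgne hh'ne
    rw [hrev, natDegree_Xn, hndeg_rev] at h1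
    omega
  have hXnzero : (mkq ((X : Polynomial F) ^ n - 1)) = 0 :=
    (mkq_eq_zero_iff _).mpr dvd_rfl
  -- dual characterization
  have hdual : ∀ a : Fin n → F, a ∈ dualCode D ↔ toPoly a ∈ Ideal.span {mkq h'} := by
    intro a
    rw [dual_iff_mul hshift]
    constructor
    · intro hmul
      obtain ⟨b₀, hb₀⟩ := toPoly_surj (mkq g)
      have hb₀D : b₀ ∈ D := (hD b₀).mpr (by rw [hb₀]; exact Ideal.subset_span rfl)
      have h1 : toPoly a * toPoly (rev b₀) = 0 := hmul b₀ hb₀D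
      rw [← phiA_toPoly, hb₀] at h1
      have h2 : toPoly a * mkq g.reverse = 0 := by
        rw [mkq_reverse]
        calc toPoly a * (psi g.natDegree * phiA (mkq g))
            = psi g.natDegree * (toPoly a * phiA (mkq g)) := by ring
          _ = 0 := by rw [h1, mul_zero]
      obtain ⟨p, hp⟩ := Ideal.Quotient.mk_surjective (toPoly a)
      rw [← hp, ← map_mul, mkq_eq_zero_iff, ← hrev] at h2
      have h3 : h' ∣ p := by
        have h4 : h' * g.reverse ∣ p * g.reverse := by
          rw [mul_comm h' g.reverse]; exact h2
        exact (mul_dvd_mul_iff_right hrevgne).mp h4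
      rw [Ideal.mem_span_singleton, ← hp]
      obtain ⟨c, hc⟩ := h3
      exact ⟨mkq c, by rw [hc, map_mul]⟩
    · intro hspan b hb
      rw [Ideal.mem_span_singleton] at hspan
      obtain ⟨z, hz⟩ := hspan
      have hbD := (hD b).mp hb
      rw [Ideal.mem_span_singleton] at hbD
      obtain ⟨z2, hz2⟩ := hbD
      have key0 : psi g.natDegree * (toPoly a * toPoly (rev b)) = 0 := by
        rw [← phiA_toPoly, hz, hz2, map_mul]
        calc psi g.natDegree * (mkq h' * z * (phiA (mkq g) * phiA z2))
            = (mkq h' * (psi g.natDegree * phiA (mkq g))) * (z * phiA z2) := by ring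
          _ = (mkq h' * mkq g.reverse) * (z * phiA z2) := by rw [← mkq_reverse]
          _ = 0 := by
              rw [← map_mul, mul_comm h' g.reverse, hrev, hXnzero, zero_mul]
      exact ((psi_isUnit g.natDegree).mul_right_eq_zero).mp key0
  constructor
  · intro hbot
    have hco : IsCoprime g h' := by
      rw [← EuclideanDomain.gcd_isUnit_iff]
      by_contra hnu
      set d := EuclideanDomain.gcd g h' with hd
      have hdg : d ∣ g := EuclideanDomain.gcd_dvd_left g h'
      have hdh : d ∣ h' := EuclideanDomain.gcd_dvd_right g h'
      have hdne : d ≠ 0 := by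
        intro h0
        rw [hd] at h0
        exact hgne (EuclideanDomain.gcd_eq_zero_iff.mp h0).1
      obtain ⟨s, hs⟩ := hdh
      obtain ⟨t, ht⟩ := hdg
      have hsne : s ≠ 0 := by intro h0; rw [h0, mul_zero] at hs; exact hh'ne hs
      set p := g * s with hps
      have hpne : p ≠ 0 := mul_ne_zero hgne hsne
      have hddeg : 1 ≤ d.natDegree := by
        by_contra hlt
        push_neg at hlt
        have hC : d = C (d.coeff 0) := eq_C_of_natDegree_eq_zero (by omega)
        have hc0 : d.coeff 0 ≠ 0 := by
          intro h0; rw [h0, C_0] at hC; exact hdne hC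
        exact hnu (by rw [hC]; exact isUnit_C.mpr (isUnit_iff_ne_zero.mpr hc0))
      have hdegp : p.natDegree < n := by
        have h1 : p.natDegree = g.natDegree + s.natDegree := natDegree_mul hgne hsne
        have h2 : h'.natDegree = d.natDegree + s.natDegree := by
          rw [hs]; exact natDegree_mul hdne hsne
        omega
      have hmkp : mkq p ≠ 0 := by
        intro hmk0
        rw [mkq_eq_zero_iff] at hmk0
        apply hpne
        apply eq_zero_of_dvd_of_degree_lt hmk0
        rw [degree_Xn, degree_eq_natDegree hpne]
        exact_mod_cast hdegp
      obtain ⟨a, ha⟩ := toPoly_surj (mkq p)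
      have haD : a ∈ D := by
        rw [hD, ha, Ideal.mem_span_singleton]
        exact ⟨mkq s, by rw [← map_mul]⟩
      have haDual : a ∈ dualCode D := by
        rw [hdual, ha, Ideal.mem_span_singleton]
        refine ⟨mkq t, ?_⟩
        rw [← map_mul]
        congr 1
        rw [hps, ht, hs]
        ring
      have ha0 : a = 0 := by
        have hmem : a ∈ D ⊓ dualCode D := ⟨haD, haDual⟩
        rw [hbot] at hmem
        simpa using hmem
      rw [ha0, toPoly_zero] at ha
      exact hmkp ha.symm
    have hdvdrev : g ∣ g.reverse := by
      apply hco.dvd_of_dvd_mul_right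
      rw [hrev]
      exact ⟨h, hh⟩
    obtain ⟨q, hq⟩ := hdvdrev
    have hqne : q ≠ 0 := by intro h0; rw [h0, mul_zero] at hq; exact hrevgne hq
    have hqdeg : q.natDegree = 0 := by
      have h1 := natDegree_mul hgne hqne
      rw [← hq, hndeg_rev] at h1
      omega
    have hqC : q = C (q.coeff 0) := eq_C_of_natDegree_eq_zero hqdeg
    have hcoeff : q.coeff 0 = g.coeff 0 := by
      have h1 : g.reverse.coeff g.natDegree = g.coeff 0 := by
        rw [coeff_reverse, revAt_le (le_refl _)]
        simp
      rw [hq, hqC, coeff_mul_C] at h1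
      rw [← h1, coeff_natDegree, hm.leadingCoeff, one_mul]
    rw [hq, hqC, hcoeff, mul_comm]
  · intro hsr
    have hsq : Squarefree ((X : Polynomial F) ^ n - 1) := squarefree_Xn hn
    have hgh' : g * h' = C (g.coeff 0)⁻¹ * ((X : Polynomial F) ^ n - 1) := by
      rw [← hrev, hsr, ← mul_assoc, ← mul_assoc, ← C_mul, inv_mul_cancel₀ hg0, C_1, one_mul]
    have hsq2 : Squarefree (g * h') := by
      apply Squarefree.squarefree_of_dvd _ hsq
      rw [hgh']
      exact ⟨C (g.coeff 0), by rw [mul_comm (C (g.coeff 0)⁻¹) _, mul_assoc, ← C_mul,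
        inv_mul_cancel₀ hg0, C_1, mul_one]⟩
    have hco : IsCoprime g h' := by
      rw [← EuclideanDomain.gcd_isUnit_iff]
      apply hsq2 (EuclideanDomain.gcd g h')
      exact mul_dvd_mul (EuclideanDomain.gcd_dvd_left g h') (EuclideanDomain.gcd_dvd_right g h')
    rw [Submodule.eq_bot_iff]
    rintro a ⟨haD, haDual⟩
    have h1 := (hD a).mp haD
    have h2 := (hdual a).mp haDual
    rw [Ideal.mem_span_singleton] at h1 h2
    obtain ⟨z1, hz1⟩ := h1
    obtain ⟨w1, hw1⟩ := Ideal.Quotient.mk_surjective z1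
    obtain ⟨z2, hz2⟩ := h2
    obtain ⟨w2, hw2⟩ := Ideal.Quotient.mk_surjective z2
    have e1 : toPoly a = mkq (g * w1) := by rw [hz1, ← hw1, ← map_mul]
    have e2 : toPoly a = mkq (h' * w2) := by rw [hz2, ← hw2, ← map_mul]
    have e3 : ((X : Polynomial F) ^ n - 1) ∣ (g * w1 - h' * w2) := by
      rw [← mkq_eq_zero_iff, map_sub, ← e1, ← e2, sub_self]
    have e4 : g ∣ h' * w2 := by
      have e5 : g ∣ g * w1 - (g * w1 - h' * w2) :=
        dvd_sub (dvd_mul_right _ _) (dvd_trans ⟨h, hh⟩ e3)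
      simpa using e5
    have e6 : g ∣ w2 := hco.dvd_of_dvd_mul_left e4
    obtain ⟨v, hv⟩ := e6
    have e7 : toPoly a = 0 := by
      rw [e2, hv, mkq_eq_zero_iff]
      have e8 : h' * (g * v) = (g * h') * v := by ring
      rw [e8, hgh']
      exact ⟨C (g.coeff 0)⁻¹ * v, by ring⟩
    have := toPoly_eq_zero e7
    exact this

end AuxC


noncomputable section AuxD
set_option linter.unusedSectionVars false

variable {F : Type} [Field F] {e : ℕ}

lemma sigma_mk_eval (σi : Rring F e →ₐ[F] F) (αi : F)
    (hσi : σi (AdjoinRoot.root ((X : Polynomial F) ^ e - 1)) = αi) (p : Polynomial F) :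
    σi (AdjoinRoot.mk ((X : Polynomial F) ^ e - 1) p) = p.eval αi := by
  rw [← AdjoinRoot.aeval_eq, ← aeval_algHom_apply, hσi]
  simp [aeval_def, eval₂_eq_eval_map]

lemma Phi_inj (he0 : e ≠ 0) (α : Fin e → F) (hα : Function.Injective α)
    (σ : Fin e → (Rring F e →ₐ[F] F))
    (hσ : ∀ i, σ i (AdjoinRoot.root ((X : Polynomial F) ^ e - 1)) = α i)
    (r : Rring F e) (h : ∀ i, σ i r = 0) : r = 0 := by
  obtain ⟨p, rfl⟩ := AdjoinRoot.mk_surjective (g := (X : Polynomial F) ^ e - 1) r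
  have hmonic : ((X : Polynomial F) ^ e - 1).Monic := by
    simpa using monic_X_pow_sub_C (1 : F) he0
  set p' := p %ₘ ((X : Polynomial F) ^ e - 1) with hp'
  have heq : AdjoinRoot.mk ((X : Polynomial F) ^ e - 1) p
      = AdjoinRoot.mk ((X : Polynomial F) ^ e - 1) p' := by
    rw [AdjoinRoot.mk_eq_mk]
    have h2 := modByMonic_eq_sub_mul_div p ((X : Polynomial F) ^ e - 1)
    exact ⟨p /ₘ ((X : Polynomial F) ^ e - 1), by rw [hp', h2]; ring⟩
  have hroots : ∀ i, (X - C (α i)) ∣ p' := by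
    intro i
    rw [dvd_iff_isRoot]
    have h3 := h i
    rw [heq, sigma_mk_eval (σ i) (α i) (hσ i) p'] at h3
    exact h3
  have hprod : (∏ i : Fin e, (X - C (α i))) ∣ p' :=
    Finset.prod_dvd_of_coprime
      ((pairwise_coprime_X_sub_C hα).set_pairwise _) (fun i _ => hroots i)
  have hmonicprod : (∏ i : Fin e, (X - C (α i))).Monic :=
    monic_prod_of_monic _ _ (fun i _ => monic_X_sub_C (α i))
  have hdegprod : (∏ i : Fin e, (X - C (α i))).degree = (e : WithBot ℕ) := by
    rw [degree_eq_natDegree hmonicprod.ne_zero,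
      natDegree_prod _ _ (fun i _ => X_sub_C_ne_zero (α i))]
    simp [natDegree_X_sub_C]
  have hp'0 : p' = 0 := by
    apply eq_zero_of_dvd_of_degree_lt hprod
    rw [hdegprod]
    have hnd : ((X : Polynomial F) ^ e - 1).natDegree = e := by
      simpa using natDegree_X_pow_sub_C (n := e) (r := (1 : F))
    have h4 := degree_modByMonic_lt p hmonic
    rwa [degree_eq_natDegree hmonic.ne_zero, hnd, ← hp'] at h4
  rw [heq, hp'0, map_zero]

end AuxD


/-- Suppose `gcd(n, q) = 1`. A cyclic code `C` of length `n` over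
`R = 𝔽_q[u]/⟨u^e − 1⟩` with component codes `C_i = ⟨g_i(x)⟩`, where the `g_i` are
monic divisors of `x^n − 1`, is an LCD code if and only if each `g_i` is
self-reciprocal. -/
theorem lcd_iff_selfReciprocal
    {F : Type} [Field F] [Fintype F] (e n : ℕ) [NeZero n] (he : 2 ≤ e)
    (hdvd : e ∣ Fintype.card F - 1)
    (hcop : Nat.Coprime n (Fintype.card F))
    (α : Fin e → F) (hα : Function.Injective α) (hroot : ∀ i, α i ^ e = 1)
    (σ : Fin e → (Rring F e →ₐ[F] F))
    (hσ : ∀ i, σ i (AdjoinRoot.root ((X : Polynomial F) ^ e - 1)) = α i)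
    (C : Submodule (Rring F e) (Fin n → Rring F e))
    (hcyc : ∀ c ∈ C, cyclicShift c ∈ C)
    (g : Fin e → Polynomial F)
    (hmonic : ∀ i, (g i).Monic)
    (hgdvd : ∀ i, g i ∣ (X : Polynomial F) ^ n - 1)
    (hcomp : ∀ i, toPoly '' (compCode (σ i) C : Set (Fin n → F)) =
      (Ideal.span {Ideal.Quotient.mk (Ideal.span {(X : Polynomial F) ^ n - 1}) (g i)} :
        Set (Polynomial F ⧸ Ideal.span {(X : Polynomial F) ^ n - 1}))) :
    C ⊓ dualCode C = ⊥ ↔ ∀ i, SelfReciprocal (g i) := by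
  classical
  have he0 : e ≠ 0 := by omega
  -- (n : F) ≠ 0
  have hnF : (n : F) ≠ 0 := by
    intro h0
    haveI := ringChar.charP F
    have h1 : ringChar F ∣ n := (CharP.cast_eq_zero_iff F (ringChar F) n).mp h0
    have h2 : ringChar F ∣ Fintype.card F :=
      (CharP.cast_eq_zero_iff F (ringChar F) _).mp (FiniteField.cast_card_eq_zero F)
    have h3 : ringChar F ∣ Nat.gcd n (Fintype.card F) := Nat.dvd_gcd h1 h2
    have hg1 : Nat.gcd n (Fintype.card F) = 1 := hcop
    rw [hg1] at h3
    have h4 : ringChar F = 1 := Nat.dvd_one.mp h3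
    have h5 : ((1 : ℕ) : F) = 0 :=
      (CharP.cast_eq_zero_iff F (ringChar F) 1).mpr (h4 ▸ dvd_refl _)
    simp at h5
  have Φinj : ∀ r : Rring F e, (∀ i, σ i r = 0) → r = 0 := Phi_inj he0 α hα σ hσ
  -- idempotents
  set ε : Fin e → Rring F e :=
    fun i => AdjoinRoot.mk ((X : Polynomial F) ^ e - 1) (Lagrange.basis Finset.univ α i) with hε
  have hαinj : Set.InjOn α ↑(Finset.univ : Finset (Fin e)) := fun x _ y _ hxy => hα hxy
  have hεσ : ∀ i k, σ k (ε i) = if i = k then 1 else 0 := by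
    intro i k
    rw [hε]
    rw [sigma_mk_eval (σ k) (α k) (hσ k)]
    rcases eq_or_ne i k with hik | hik
    · rw [if_pos hik, hik]
      exact Lagrange.eval_basis_self hαinj (Finset.mem_univ k)
    · rw [if_neg hik]
      exact Lagrange.eval_basis_of_ne hik (Finset.mem_univ k)
  -- membership in component codes
  have hcompMem : ∀ (i : Fin e) (w : Fin n → F),
      w ∈ compCode (σ i) C ↔ ∃ y ∈ C, (fun j => σ i (y j)) = w := by
    intro i w
    rw [compCode, Submodule.mem_map]
    constructor
    · rintro ⟨y, hy, rfl⟩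
      exact ⟨y, (Submodule.restrictScalars_mem F C y).mp hy, rfl⟩
    · rintro ⟨y, hy, rfl⟩
      exact ⟨y, (Submodule.restrictScalars_mem F C y).mpr hy, rfl⟩
  -- membership characterization for C
  have hmemC : ∀ x : Fin n → Rring F e,
      x ∈ C ↔ ∀ i, (fun j => σ i (x j)) ∈ compCode (σ i) C := by
    intro x
    constructor
    · intro hx i
      exact (hcompMem i _).mpr ⟨x, hx, rfl⟩
    · intro hx
      choose c hcC hcσ using fun i => (hcompMem i _).mp (hx i)
      have hxe : x = ∑ i, ε i • c i := by
        funext j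
        have hz : ∀ k, σ k ((∑ i, ε i • c i) j - x j) = 0 := by
          intro k
          rw [map_sub, Finset.sum_apply]
          have hterm : ∀ i, σ k ((ε i • c i) j) = (if i = k then 1 else 0) * σ k (c i j) := by
            intro i
            rw [Pi.smul_apply, smul_eq_mul, map_mul, hεσ]
          rw [map_sum]
          simp only [hterm, ite_mul, one_mul, zero_mul]
          rw [Finset.sum_ite_eq' Finset.univ k (fun i => σ k (c i j)),
            if_pos (Finset.mem_univ k), congrFun (hcσ k) j, sub_self]
        have := Φinj _ hz
        exact (sub_eq_zero.mp this).symm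
      rw [hxe]
      exact Submodule.sum_smul_mem C ε (fun i _ => hcC i)
  -- dual characterization
  have hdualC : ∀ x : Fin n → Rring F e,
      x ∈ dualCode C ↔ ∀ i, (fun j => σ i (x j)) ∈ dualCode (compCode (σ i) C) := by
    intro x
    constructor
    · intro hx i w hw
      obtain ⟨y, hy, hyw⟩ := (hcompMem i w).mp hw
      have h1 := hx y hy
      calc ∑ j, σ i (x j) * w j = ∑ j, σ i (x j * y j) := by
            apply Finset.sum_congr rfl
            intro j _
            rw [map_mul]
            congr 1
            exact (congrFun hyw j).symm
        _ = σ i (∑ j, x j * y j) := (map_sum _ _ _).symm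
        _ = 0 := by rw [h1, map_zero]
    · intro hx y hy
      apply Φinj
      intro i
      have h1 := hx i (fun j => σ i (y j)) ((hcompMem i _).mpr ⟨y, hy, rfl⟩)
      calc σ i (∑ j, x j * y j) = ∑ j, σ i (x j) * σ i (y j) := by
            rw [map_sum]; exact Finset.sum_congr rfl (fun j _ => map_mul _ _ _)
        _ = 0 := h1
  -- per-component characterization against the ideal
  have hDi : ∀ (i : Fin e) (a : Fin n → F),
      a ∈ compCode (σ i) C ↔ toPoly a ∈ Ideal.span
        {Ideal.Quotient.mk (Ideal.span {(X : Polynomial F) ^ n - 1}) (g i)} := by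
    intro i a
    constructor
    · intro ha
      have h1 : toPoly a ∈ toPoly '' (compCode (σ i) C : Set (Fin n → F)) :=
        Set.mem_image_of_mem _ ha
      rw [hcomp i] at h1
      exact h1
    · intro ha
      have h1 : toPoly a ∈ (Ideal.span
          {Ideal.Quotient.mk (Ideal.span {(X : Polynomial F) ^ n - 1}) (g i)} :
          Set (Polynomial F ⧸ Ideal.span {(X : Polynomial F) ^ n - 1})) := ha
      rw [← hcomp i] at h1
      obtain ⟨b, hb, hba⟩ := h1
      rwa [← toPoly_inj hba]
  -- shift stability of component codes
  have hshifti : ∀ (i : Fin e), ∀ b ∈ compCode (σ i) C, cyclicShift b ∈ compCode (σ i) C := by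
    intro i b hb
    obtain ⟨y, hy, rfl⟩ := (hcompMem i b).mp hb
    exact (hcompMem i _).mpr ⟨cyclicShift y, hcyc y hy, rfl⟩
  -- the per-component key lemma
  have hkey : ∀ i : Fin e, compCode (σ i) C ⊓ dualCode (compCode (σ i) C) = ⊥
      ↔ SelfReciprocal (g i) := by
    intro i
    exact key_lemma hnF (g i) (hmonic i) (hgdvd i) (compCode (σ i) C) (hshifti i) (hDi i)
  constructor
  · intro hbot i
    rw [← hkey i, Submodule.eq_bot_iff]
    rintro v ⟨hvD, hvDual⟩
    set x : Fin n → Rring F e := fun j => ε i * algebraMap F (Rring F e) (v j) with hx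
    have hσx : ∀ k, (fun j => σ k (x j)) = if i = k then v else 0 := by
      intro k
      funext j
      rw [hx]
      simp only
      rw [map_mul, hεσ, AlgHom.commutes]
      rcases eq_or_ne i k with hik | hik
      · rw [if_pos hik, if_pos hik]
        simp [Algebra.algebraMap_self]
      · rw [if_neg hik, if_neg hik]
        simp
    have hxC : x ∈ C := by
      rw [hmemC]
      intro k
      rw [hσx k]
      rcases eq_or_ne i k with hik | hik
      · rw [if_pos hik, ← hik]
        exact hvD
      · rw [if_neg hik]
        exact Submodule.zero_mem _
    have hxDual : x ∈ dualCode C := by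
      rw [hdualC]
      intro k
      rw [hσx k]
      rcases eq_or_ne i k with hik | hik
      · rw [if_pos hik, ← hik]
        exact hvDual
      · rw [if_neg hik]
        exact Submodule.zero_mem _
    have hx0 : x = 0 := by
      have hmem : x ∈ C ⊓ dualCode C := ⟨hxC, hxDual⟩
      rw [hbot] at hmem
      simpa using hmem
    funext j
    have h1 := congrFun (hσx i) j
    rw [if_pos rfl, hx0] at h1
    simpa using h1.symm
  · intro hsr
    rw [Submodule.eq_bot_iff]
    rintro x ⟨hxC, hxDual⟩
    funext j
    apply Φinj
    intro i
    have hmem : (fun j => σ i (x j)) ∈ compCode (σ i) C ⊓ dualCode (compCode (σ i) C) :=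
      ⟨(hmemC x).mp hxC i, (hdualC x).mp hxDual i⟩
    rw [(hkey i).mpr (hsr i)] at hmem
    have := congrFun ((Submodule.mem_bot F).mp hmem) j
    simpa using this
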